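/- arXiv:0902.0104 — 3 statements merged into one kernel-verified Lean document; each statement's English description precedes it below -/
import Mathlib

section
/- Let Γ : ℝ → S² ⊂ ℝ³ be a smooth unit-speed curve on the unit sphere with geodesic curvature κ, so Γ'' = −Γ + κ(Γ × Γ'). Fix l ∈ (0, π). Define v(s) = sin(α(s))(Γ(s) × Γ'(s)) + cos(α(s))Γ'(s) and γ(s) = cos(l)Γ(s) + sin(l)v(s), and ṽ(s) = cos(l)v(s) − sin(l)Γ(s). Then γ'(s) is parallel to ṽ(s) for all s if and only if α satisfies α'(s) + κ(s) = cot(l)·sin(α(s)). -/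
/-- Euclidean dot product on ℝ³. -/
def dot3 (x y : Fin 3 → ℝ) : ℝ := x 0 * y 0 + x 1 * y 1 + x 2 * y 2

/-- Euclidean cross product on ℝ³. -/
def cross3 (x y : Fin 3 → ℝ) : Fin 3 → ℝ :=
  ![x 1 * y 2 - x 2 * y 1, x 2 * y 0 - x 0 * y 2, x 0 * y 1 - x 1 * y 0]

lemma cross3_self (a : Fin 3 → ℝ) : cross3 a a = 0 := by
  funext i; fin_cases i <;> simp [cross3] <;> ring

lemma cross3_add_right (a b c : Fin 3 → ℝ) : cross3 a (b + c) = cross3 a b + cross3 a c := by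
  funext i; fin_cases i <;> simp [cross3] <;> ring

lemma cross3_neg_right (a b : Fin 3 → ℝ) : cross3 a (-b) = -cross3 a b := by
  funext i; fin_cases i <;> simp [cross3] <;> ring

lemma cross3_smul_right (r : ℝ) (a b : Fin 3 → ℝ) : cross3 a (r • b) = r • cross3 a b := by
  funext i; fin_cases i <;> simp [cross3] <;> ring

lemma triple3 (a b : Fin 3 → ℝ) : cross3 a (cross3 a b) = dot3 a b • a - dot3 a a • b := by
  funext i; fin_cases i <;> simp [cross3, dot3] <;> ring

lemma dot3_cross_left (a b : Fin 3 → ℝ) : dot3 a (cross3 a b) = 0 := by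
  simp [cross3, dot3]; ring

lemma dot3_cross_right (a b : Fin 3 → ℝ) : dot3 b (cross3 a b) = 0 := by
  simp [cross3, dot3]; ring

lemma lagrange3 (a b : Fin 3 → ℝ) :
    dot3 (cross3 a b) (cross3 a b) = dot3 a a * dot3 b b - dot3 a b * dot3 a b := by
  simp [cross3, dot3]; ring

lemma hasDerivAt_cross3 {f g : ℝ → Fin 3 → ℝ} {f' g' : Fin 3 → ℝ} {s : ℝ}
    (hf : HasDerivAt f f' s) (hg : HasDerivAt g g' s) :
    HasDerivAt (fun t => cross3 (f t) (g t)) (cross3 f' (g s) + cross3 (f s) g') s := by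
  rw [hasDerivAt_pi]
  have F := fun i => hasDerivAt_pi.mp hf i
  have G := fun i => hasDerivAt_pi.mp hg i
  intro i
  fin_cases i <;>
  · simp only [cross3, Pi.add_apply, Matrix.cons_val_zero, Matrix.cons_val_one,
      Matrix.head_cons, Matrix.cons_val_two, Matrix.tail_cons, Fin.isValue, Fin.zero_eta,
      Fin.mk_one, Fin.reduceFinMk]
    convert (((F _).fun_mul (G _)).fun_sub ((F _).fun_mul (G _))) using 1
    try simp [Matrix.cons_val_zero, Matrix.cons_val_one, Matrix.head_cons, Fin.isValue]
    ring

lemma combo_inj (g t n : Fin 3 → ℝ) (hgg : dot3 g g = 1) (htt : dot3 t t = 1)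
    (hnn : dot3 n n = 1) (hgt : dot3 g t = 0) (hgn : dot3 g n = 0) (htn : dot3 t n = 0)
    {a b d a' b' d' : ℝ}
    (h : a • g + b • t + d • n = a' • g + b' • t + d' • n) :
    a = a' ∧ b = b' ∧ d = d' := by
  have h0 := congrFun h 0
  have h1 := congrFun h 1
  have h2 := congrFun h 2
  simp only [Pi.add_apply, Pi.smul_apply, smul_eq_mul] at h0 h1 h2
  simp only [dot3] at hgg htt hnn hgt hgn htn
  refine ⟨?_, ?_, ?_⟩
  · linear_combination g 0 * h0 + g 1 * h1 + g 2 * h2 + (a'-a) * hgg + (b'-b) * hgt + (d'-d) * hgn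
  · linear_combination t 0 * h0 + t 1 * h1 + t 2 * h2 + (a'-a) * hgt + (b'-b) * htt + (d'-d) * htn
  · linear_combination n 0 * h0 + n 1 * h1 + n 2 * h2 + (a'-a) * hgn + (b'-b) * htn + (d'-d) * hnn
/-- Spherical bicycle equation: for a unit-speed spherical front-wheel curve `Γ` with
geodesic curvature `κ` (so `Γ'' = -Γ + κ (Γ × Γ')`), bicycle length `l ∈ (0,π)`,
frame direction `v = sin α (Γ × Γ') + cos α Γ'`, rear wheel `γ = cos l Γ + sin l v`
and transported frame `vtil = cos l v - sin l Γ`, the rear-wheel velocity `γ'` is parallel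
to `vtil` for all `s` iff `α' + κ = cot(l) sin α`. -/
theorem stmt_8 (Γ : ℝ → (Fin 3 → ℝ)) (κ α : ℝ → ℝ) (l : ℝ)
    (hl : l ∈ Set.Ioo 0 Real.pi)
    (hΓ : ContDiff ℝ (⊤ : ℕ∞) Γ) (hα : Differentiable ℝ α)
    (hsphere : ∀ s, dot3 (Γ s) (Γ s) = 1)
    (hunit : ∀ s, dot3 (deriv Γ s) (deriv Γ s) = 1)
    (hcurv : ∀ s, deriv (deriv Γ) s = -Γ s + κ s • cross3 (Γ s) (deriv Γ s))
    (v γ vtil : ℝ → (Fin 3 → ℝ))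
    (hv : ∀ s, v s = Real.sin (α s) • cross3 (Γ s) (deriv Γ s)
        + Real.cos (α s) • deriv Γ s)
    (hγ : ∀ s, γ s = Real.cos l • Γ s + Real.sin l • v s)
    (hvtil : ∀ s, vtil s = Real.cos l • v s - Real.sin l • Γ s) :
    (∀ s, ∃ c : ℝ, deriv γ s = c • vtil s) ↔
    (∀ s, deriv α s + κ s = Real.cot l * Real.sin (α s)) := by
  obtain ⟨hl0, hlπ⟩ := hl
  have hsl : Real.sin l ≠ 0 := ne_of_gt (Real.sin_pos_of_pos_of_lt_pi hl0 hlπ)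
  have hΓdiff : Differentiable ℝ Γ := hΓ.differentiable (by simp)
  have hGinf : ContDiff ℝ ((⊤:ℕ∞) : WithTop ℕ∞) Γ := hΓ.of_le (by simp)
  have hTcd : ContDiff ℝ ((⊤:ℕ∞) : WithTop ℕ∞) (deriv Γ) := (contDiff_infty_iff_deriv.mp hGinf).2
  have hΓd : ∀ u, HasDerivAt Γ (deriv Γ u) u := fun u => (hΓdiff u).hasDerivAt
  have hTd : ∀ u, HasDerivAt (deriv Γ) (deriv (deriv Γ) u) u :=
    fun u => ((hTcd.differentiable (by simp)) u).hasDerivAt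
  have hαd : ∀ u, HasDerivAt α (deriv α u) u := fun u => (hα u).hasDerivAt
  -- Γ ⊥ Γ'
  have hgt : ∀ s, dot3 (Γ s) (deriv Γ s) = 0 := by
    intro s
    have hc : ∀ i, HasDerivAt (fun u => Γ u i) (deriv Γ s i) s :=
      fun i => hasDerivAt_pi.mp (hΓd s) i
    have hD : HasDerivAt (fun u => dot3 (Γ u) (Γ u)) (2 * dot3 (Γ s) (deriv Γ s)) s := by
      simp only [dot3]
      convert (((hc 0).fun_mul (hc 0)).fun_add ((hc 1).fun_mul (hc 1))).fun_add ((hc 2).fun_mul (hc 2)) using 1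
      all_goals first | ring | rfl
    have h0 : HasDerivAt (fun u => dot3 (Γ u) (Γ u)) 0 s := by
      have hconst : (fun u => dot3 (Γ u) (Γ u)) = fun _ => (1:ℝ) := funext hsphere
      rw [hconst]; exact hasDerivAt_const s 1
    have := h0.unique hD
    linarith
  have hgn : ∀ s, dot3 (Γ s) (cross3 (Γ s) (deriv Γ s)) = 0 :=
    fun s => dot3_cross_left _ _
  have htn : ∀ s, dot3 (deriv Γ s) (cross3 (Γ s) (deriv Γ s)) = 0 :=
    fun s => dot3_cross_right _ _
  have hnn : ∀ s, dot3 (cross3 (Γ s) (deriv Γ s)) (cross3 (Γ s) (deriv Γ s)) = 1 := by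
    intro s; rw [lagrange3, hsphere s, hunit s, hgt s]; ring
  -- the derivative of γ in the moving frame
  have hγderiv : ∀ s, deriv γ s =
      (-(Real.sin l * Real.cos (α s))) • Γ s
      + (Real.cos l - Real.sin l * ((deriv α s + κ s) * Real.sin (α s))) • deriv Γ s
      + (Real.sin l * ((deriv α s + κ s) * Real.cos (α s))) • cross3 (Γ s) (deriv Γ s) := by
    intro s
    have hNd : HasDerivAt (fun u => cross3 (Γ u) (deriv Γ u))
        (cross3 (deriv Γ s) (deriv Γ s) + cross3 (Γ s) (deriv (deriv Γ) s)) s :=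
      hasDerivAt_cross3 (hΓd s) (hTd s)
    have hNval : cross3 (deriv Γ s) (deriv Γ s) + cross3 (Γ s) (deriv (deriv Γ) s)
        = (-(κ s)) • deriv Γ s := by
      rw [hcurv s, cross3_self, cross3_add_right, cross3_neg_right, cross3_self,
        cross3_smul_right, triple3, hgt s, hsphere s]
      module
    rw [hNval] at hNd
    have hsind : HasDerivAt (fun u => Real.sin (α u)) (Real.cos (α s) * deriv α s) s :=
      (hαd s).sin
    have hcosd : HasDerivAt (fun u => Real.cos (α u)) (-Real.sin (α s) * deriv α s) s :=
      (hαd s).cos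
    have hvd : HasDerivAt v
        ((Real.sin (α s) • ((-(κ s)) • deriv Γ s)
            + (Real.cos (α s) * deriv α s) • cross3 (Γ s) (deriv Γ s))
          + (Real.cos (α s) • deriv (deriv Γ) s
            + (-Real.sin (α s) * deriv α s) • deriv Γ s)) s := by
      have hvfun : v = fun u => Real.sin (α u) • cross3 (Γ u) (deriv Γ u)
          + Real.cos (α u) • deriv Γ u := funext hv
      rw [hvfun]
      exact (hsind.smul hNd).add (hcosd.smul (hTd s))
    have hγd : HasDerivAt γ
        (Real.cos l • deriv Γ s + Real.sin l •
          ((Real.sin (α s) • ((-(κ s)) • deriv Γ s)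
            + (Real.cos (α s) * deriv α s) • cross3 (Γ s) (deriv Γ s))
          + (Real.cos (α s) • deriv (deriv Γ) s
            + (-Real.sin (α s) * deriv α s) • deriv Γ s))) s := by
      have hγfun : γ = fun u => Real.cos l • Γ u + Real.sin l • v u := funext hγ
      rw [hγfun]
      exact ((hΓd s).const_smul (Real.cos l)).add (hvd.const_smul (Real.sin l))
    rw [hγd.deriv, hcurv s]
    module
  -- vtil in the moving frame
  have hvtil' : ∀ s, vtil s =
      (-(Real.sin l)) • Γ s + (Real.cos l * Real.cos (α s)) • deriv Γ s
      + (Real.cos l * Real.sin (α s)) • cross3 (Γ s) (deriv Γ s) := by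
    intro s; rw [hvtil s, hv s]; module
  constructor
  · intro h s
    obtain ⟨c, hc⟩ := h s
    rw [hγderiv s, hvtil' s] at hc
    have hc2 : c • ((-(Real.sin l)) • Γ s + (Real.cos l * Real.cos (α s)) • deriv Γ s
        + (Real.cos l * Real.sin (α s)) • cross3 (Γ s) (deriv Γ s))
        = (c * (-(Real.sin l))) • Γ s + (c * (Real.cos l * Real.cos (α s))) • deriv Γ s
        + (c * (Real.cos l * Real.sin (α s))) • cross3 (Γ s) (deriv Γ s) := by module
    rw [hc2] at hc
    obtain ⟨e1, e2, e3⟩ := combo_inj (Γ s) (deriv Γ s) (cross3 (Γ s) (deriv Γ s))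
      (hsphere s) (hunit s) (hnn s) (hgt s) (hgn s) (htn s) hc
    have hcval : c = Real.cos (α s) := by
      have h' : Real.sin l * c = Real.sin l * Real.cos (α s) := by linear_combination e1
      exact (mul_left_cancel₀ hsl h').symm.symm
    rw [Real.cot_eq_cos_div_sin, div_mul_eq_mul_div, eq_div_iff hsl]
    rw [hcval] at e2 e3
    by_cases hco : Real.cos (α s) = 0
    · have pyth := Real.sin_sq_add_cos_sq (α s)
      have psq : Real.sin (α s) ^ 2 = 1 := by nlinarith
      linear_combination (-(Real.sin (α s))) * e2
        - (Real.sin l * (deriv α s + κ s)) * psq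
        - (Real.cos (α s) * Real.cos l * Real.sin (α s)) * hco
    · have key : Real.cos (α s) * ((deriv α s + κ s) * Real.sin l)
          = Real.cos (α s) * (Real.cos l * Real.sin (α s)) := by
        linear_combination e3
      have := mul_left_cancel₀ hco key
      linarith
  · intro h s
    refine ⟨Real.cos (α s), ?_⟩
    rw [hγderiv s, hvtil' s]
    have hA := h s
    rw [Real.cot_eq_cos_div_sin] at hA
    have key : (deriv α s + κ s) * Real.sin l = Real.cos l * Real.sin (α s) := by
      field_simp at hA
      linarith [hA]
    have pyth := Real.sin_sq_add_cos_sq (α s)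
    funext i
    simp only [Pi.add_apply, Pi.smul_apply, Pi.sub_apply, smul_eq_mul]
    linear_combination
      ((Real.cos (α s) * (cross3 (Γ s) (deriv Γ s) i)) - Real.sin (α s) * (deriv Γ s i)) * key
      + (-(Real.cos l) * (deriv Γ s i)) * pyth
end

section
/- In the setting of the spherical bicycle equation (α' + κ = cot(l) sin α, with γ(s) = cos(l)Γ(s) + sin(l)v(s) as above), the speed of the rear wheel satisfies |γ'(s)| = |cos(α(s))| for all s. -/
open scoped ContDiff


/-- In the setting of the spherical bicycle equation (`α' + κ = cot(l) sin α`,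
rear wheel `γ = cos l Γ + sin l v`), the rear-wheel speed satisfies `|γ'| = |cos α|`. -/
theorem stmt_9 (Γ : ℝ → (Fin 3 → ℝ)) (κ α : ℝ → ℝ) (l : ℝ)
    (hl : l ∈ Set.Ioo 0 Real.pi)
    (hΓ : ContDiff ℝ (⊤ : ℕ∞) Γ) (hα : Differentiable ℝ α)
    (hsphere : ∀ s, dot3 (Γ s) (Γ s) = 1)
    (hunit : ∀ s, dot3 (deriv Γ s) (deriv Γ s) = 1)
    (hcurv : ∀ s, deriv (deriv Γ) s = -Γ s + κ s • cross3 (Γ s) (deriv Γ s))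
    (hode : ∀ s, deriv α s + κ s = Real.cot l * Real.sin (α s))
    (v γ : ℝ → (Fin 3 → ℝ))
    (hv : ∀ s, v s = Real.sin (α s) • cross3 (Γ s) (deriv Γ s)
        + Real.cos (α s) • deriv Γ s)
    (hγ : ∀ s, γ s = Real.cos l • Γ s + Real.sin l • v s) :
    ∀ s, Real.sqrt (dot3 (deriv γ s) (deriv γ s)) = |Real.cos (α s)| := by
  intro s
  obtain ⟨hl0, hlpi⟩ := hl
  have hBpos : 0 < Real.sin l := Real.sin_pos_of_pos_of_lt_pi hl0 hlpi
  have hBne : Real.sin l ≠ 0 := ne_of_gt hBpos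
  have hone : (1 : WithTop ℕ∞) ≤ ∞ := by exact_mod_cast le_top
  have hGi : ContDiff ℝ ∞ Γ := hΓ.of_le (by simp)
  have hdΓ : Differentiable ℝ Γ := hGi.differentiable (by simp)
  have hdΓ' : Differentiable ℝ (deriv Γ) :=
    (contDiff_infty_iff_deriv.mp hGi).2.differentiable (by simp)
  set a : Fin 3 → ℝ := Γ s with ha_def
  set b : Fin 3 → ℝ := deriv Γ s with hb_def
  set A := Real.cos l with hA_def
  set B := Real.sin l with hB_def
  set c := Real.cos (α s) with hc_def
  set sa := Real.sin (α s) with hsa_def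
  set k := κ s with hk_def
  set d := deriv α s with hd_def
  have hΓd : HasDerivAt Γ b s := (hdΓ s).hasDerivAt
  have hΓ'd : HasDerivAt (deriv Γ) (deriv (deriv Γ) s) s := (hdΓ' s).hasDerivAt
  have hαd : HasDerivAt α d s := (hα s).hasDerivAt
  have h1 := hasDerivAt_pi.mp hΓd
  have h2 := hasDerivAt_pi.mp hΓ'd
  -- derivative of the normal field
  have hnd : HasDerivAt (fun t => cross3 (Γ t) (deriv Γ t))
      (cross3 a (deriv (deriv Γ) s)) s := by
    have hc0 : HasDerivAt (fun t => Γ t 1 * deriv Γ t 2 - Γ t 2 * deriv Γ t 1)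
        (a 1 * deriv (deriv Γ) s 2 - a 2 * deriv (deriv Γ) s 1) s := by
      convert ((h1 1).mul (h2 2)).sub ((h1 2).mul (h2 1)) using 1
      all_goals first | rfl | ring
    have hc1 : HasDerivAt (fun t => Γ t 2 * deriv Γ t 0 - Γ t 0 * deriv Γ t 2)
        (a 2 * deriv (deriv Γ) s 0 - a 0 * deriv (deriv Γ) s 2) s := by
      convert ((h1 2).mul (h2 0)).sub ((h1 0).mul (h2 2)) using 1
      all_goals first | rfl | ring
    have hc2 : HasDerivAt (fun t => Γ t 0 * deriv Γ t 1 - Γ t 1 * deriv Γ t 0)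
        (a 0 * deriv (deriv Γ) s 1 - a 1 * deriv (deriv Γ) s 0) s := by
      convert ((h1 0).mul (h2 1)).sub ((h1 1).mul (h2 0)) using 1
      all_goals first | rfl | ring
    rw [hasDerivAt_pi]
    intro i
    fin_cases i
    · exact hc0
    · exact hc1
    · exact hc2
  -- derivative of v
  have hvd : HasDerivAt v
      ((sa • cross3 a (deriv (deriv Γ) s) + (c * d) • cross3 a b)
        + (c • deriv (deriv Γ) s + (-sa * d) • b)) s := by
    have hfun : v = fun t => Real.sin (α t) • cross3 (Γ t) (deriv Γ t)
        + Real.cos (α t) • deriv Γ t := funext hv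
    rw [hfun]
    exact (hαd.sin.smul hnd).add (hαd.cos.smul hΓ'd)
  -- derivative of γ
  have hγd : HasDerivAt γ
      (A • b + B • ((sa • cross3 a (deriv (deriv Γ) s) + (c * d) • cross3 a b)
        + (c • deriv (deriv Γ) s + (-sa * d) • b))) s := by
    have hfun : γ = fun t => A • Γ t + B • v t := funext hγ
    rw [hfun]
    exact (hΓd.const_smul A).add (hvd.const_smul B)
  have hderiv := hγd.deriv
  rw [hcurv s, ← ha_def, ← hb_def, ← hk_def] at hderiv
  -- scalar identities
  have hsp : a 0 * a 0 + a 1 * a 1 + a 2 * a 2 = 1 := hsphere s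
  have hun : b 0 * b 0 + b 1 * b 1 + b 2 * b 2 = 1 := hunit s
  have hpy : c ^ 2 + sa ^ 2 = 1 := Real.cos_sq_add_sin_sq (α s)
  have hAB : A ^ 2 + B ^ 2 = 1 := Real.cos_sq_add_sin_sq l
  have hodeB : B * (d + k) = A * sa := by
    have h := hode s
    rw [Real.cot_eq_cos_div_sin] at h
    have hBne' : Real.sin l ≠ 0 := hBne
    field_simp at h
    linarith [h]
  -- orthogonality a ⟂ b
  have horth : a 0 * b 0 + a 1 * b 1 + a 2 * b 2 = 0 := by
    have hc1 : HasDerivAt (fun t => dot3 (Γ t) (Γ t))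
        (2 * (a 0 * b 0 + a 1 * b 1 + a 2 * b 2)) s := by
      simp only [dot3]
      convert (((h1 0).mul (h1 0)).add ((h1 1).mul (h1 1))).add
        ((h1 2).mul (h1 2)) using 1
      all_goals first | rfl | ring
    have hc2 : HasDerivAt (fun t => dot3 (Γ t) (Γ t)) 0 s := by
      have : (fun t => dot3 (Γ t) (Γ t)) = fun _ => (1 : ℝ) := funext hsphere
      rw [this]
      exact hasDerivAt_const s 1
    have := hc1.unique hc2
    linarith
  -- the derivative equals c • w where w = -B•a + (A*c)•b + (A*sa)•(a×b)
  have hE : deriv γ s = c • ((-B) • a + (A * c) • b + (A * sa) • cross3 a b) := by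
    rw [hderiv]
    funext i
    fin_cases i <;>
      simp only [cross3, Pi.add_apply, Pi.smul_apply, Pi.neg_apply, smul_eq_mul,
        Fin.zero_eta, Fin.mk_one, Fin.reduceFinMk, Fin.isValue,
        Matrix.cons_val_zero, Matrix.cons_val_one, Matrix.head_cons,
        Matrix.cons_val_two, Matrix.tail_cons]
    · linear_combination (c * (a 1 * b 2 - a 2 * b 1) - sa * b 0) * hodeB
        + (-(A * b 0)) * hpy + (-(B * sa * k * b 0)) * hsp + (B * sa * k * a 0) * horth
    · linear_combination (c * (a 2 * b 0 - a 0 * b 2) - sa * b 1) * hodeB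
        + (-(A * b 1)) * hpy + (-(B * sa * k * b 1)) * hsp + (B * sa * k * a 1) * horth
    · linear_combination (c * (a 0 * b 1 - a 1 * b 0) - sa * b 2) * hodeB
        + (-(A * b 2)) * hpy + (-(B * sa * k * b 2)) * hsp + (B * sa * k * a 2) * horth
  rw [hE]
  have hval : dot3 (c • ((-B) • a + (A * c) • b + (A * sa) • cross3 a b))
      (c • ((-B) • a + (A * c) • b + (A * sa) • cross3 a b)) = c ^ 2 := by
    simp only [dot3, cross3, Pi.add_apply, Pi.smul_apply, Pi.neg_apply, smul_eq_mul,
      Matrix.cons_val_zero, Matrix.cons_val_one, Matrix.head_cons,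
      Matrix.cons_val_two, Matrix.tail_cons]
    linear_combination (c ^ 2 * (B ^ 2 + A ^ 2 * sa ^ 2
          * (b 0 * b 0 + b 1 * b 1 + b 2 * b 2))) * hsp
      + (c ^ 2 * (-2 * A * B * c - A ^ 2 * sa ^ 2
          * (a 0 * b 0 + a 1 * b 1 + a 2 * b 2))) * horth
      + (c ^ 2 * (A ^ 2 * c ^ 2 + A ^ 2 * sa ^ 2)) * hun
      + (c ^ 2 * A ^ 2) * hpy + (c ^ 2) * hAB
  rw [hval]
  exact Real.sqrt_sq_eq_abs c
end

section
/- Consider the family of equations sin(α) = tan(l)(α'(s) + κ(s)) for a periodic continuous function κ with period L. In the limit l → 0 the equation sin(α) = 0 has exactly two constant solutions α ≡ 0 and α ≡ π on the circle, and these are nondegenerate (the derivative of sin at 0 and π is ±1 ≠ 0); hence for all sufficiently small l > 0 the time-L monodromy map of α' = cot(l)sin(α) − κ has at least two fixed points. -/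
/-!
Once `c = cot l` exceeds `sup |κ| / sin (π/4)`, the field `c sin α - κ(s)` is positive on the
lines `α = π/4`, `α = 3π/4` and negative on `α = -π/4`, `α = 5π/4`, whatever `s` is. These lines
are barriers for the flow, so the time-`L` map `φ`, which is continuous because the field is
globally Lipschitz and bounded, satisfies `φ (-π/4) ≤ -π/4`, `π/4 ≤ φ (π/4)`, and likewise around
`π`. The intermediate value theorem then gives a fixed point of `φ` within `π/4` of `0` and
another within `π/4` of `π`; these are distinct modulo `2π`.
-/
open Set Filter Topology Real

section ODE

variable {E : Type*} [NormedAddCommGroup E] [NormedSpace ℝ E] {v : ℝ → E → E} {K C : NNReal}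

theorem exists_forall_mem_Ioo_hasDerivAt_of_lipschitzWith_of_norm_le [CompleteSpace E]
    (hv : ∀ t, LipschitzWith K (v t)) (hcont : ∀ x, Continuous (v · x))
    (hC : ∀ t x, ‖v t x‖ ≤ C) (x₀ : E) (T : NNReal) :
    ∃ f : ℝ → E, f 0 = x₀ ∧ ∀ t ∈ Ioo (-T : ℝ) T, HasDerivAt f (v t (f t)) t := by
  have h0 : (0 : ℝ) ∈ Icc (-T : ℝ) T := ⟨by simp, T.2⟩
  have hpl : IsPicardLindelof v (⟨0, h0⟩ : Icc (-T : ℝ) T) x₀ (C * T) 0 C K :=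
    { lipschitzOnWith := fun t _ => (hv t).lipschitzOnWith
      continuousOn := fun x _ => (hcont x).continuousOn
      norm_le := fun t _ x _ => hC t x
      mul_max_le := by simp }
  obtain ⟨f, hf0, hf⟩ := hpl.exists_eq_forall_mem_Icc_hasDerivWithinAt₀
  exact ⟨f, hf0, fun t ht => (hf t (Ioo_subset_Icc_self ht)).hasDerivAt (Icc_mem_nhds ht.1 ht.2)⟩

theorem exists_forall_hasDerivAt_of_lipschitzWith_of_norm_le [CompleteSpace E]
    (hv : ∀ t, LipschitzWith K (v t)) (hcont : ∀ x, Continuous (v · x))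
    (hC : ∀ t x, ‖v t x‖ ≤ C) (x₀ : E) :
    ∃ f : ℝ → E, f 0 = x₀ ∧ ∀ t, HasDerivAt f (v t (f t)) t := by
  choose sol hsol0 hsol using fun n : ℕ =>
    exists_forall_mem_Ioo_hasDerivAt_of_lipschitzWith_of_norm_le hv hcont hC x₀ (n + 1)
  have hagree : ∀ m n : ℕ, ∀ t : ℝ, |t| < m + 1 → |t| < n + 1 → sol m t = sol n t := by
    intro m n t hm hn
    set r : ℝ := min (m + 1) (n + 1)
    have hr : 0 < r := lt_min (by positivity) (by positivity)
    have hsub : ∀ k : ℕ, r ≤ k + 1 → Ioo (-r) r ⊆ Ioo (-(k + 1 : NNReal) : ℝ) (k + 1 : NNReal) :=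
      fun k hk => by push_cast; exact Ioo_subset_Ioo (by linarith) hk
    exact ODE_solution_unique_of_mem_Ioo (s := fun _ => univ) (fun t _ => (hv t).lipschitzOnWith)
      ⟨neg_lt_zero.mpr hr, hr⟩
      (fun t ht => ⟨hsol m t (hsub m (min_le_left _ _) ht), mem_univ _⟩)
      (fun t ht => ⟨hsol n t (hsub n (min_le_right _ _) ht), mem_univ _⟩)
      (by rw [hsol0, hsol0]) (abs_lt.mp (lt_min hm hn))
  refine ⟨fun t => sol ⌈|t|⌉₊ t, by simpa using hsol0 0, fun t => ?_⟩
  have hlt : ∀ s : ℝ, |s| < ⌈|s|⌉₊ + 1 := fun s => (Nat.le_ceil _).trans_lt (lt_add_one _)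
  have hnear : (fun s => sol ⌈|s|⌉₊ s) =ᶠ[𝓝 t] sol ⌈|t|⌉₊ := by
    filter_upwards [(continuous_abs.tendsto t).eventually_lt_const (hlt t)] with s hs
    exact hagree _ _ s (hlt s) hs
  refine ((hsol _ t ?_).congr_of_eventuallyEq hnear).congr_deriv ?_
  · push_cast; exact abs_lt.mp (hlt t)
  · rw [hnear.eq_of_nhds]

theorem continuous_solution_eval_of_lipschitzWith (hv : ∀ t, LipschitzWith K (v t))
    {A : E → ℝ → E} (hA0 : ∀ x, A x 0 = x) (hA : ∀ x t, HasDerivAt (A x) (v t (A x t)) t)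
    {T : ℝ} (hT : 0 ≤ T) : Continuous fun x => A x T := by
  refine (LipschitzWith.of_dist_le_mul (K := (exp (K * T)).toNNReal) fun x y => ?_).continuous
  have := dist_le_of_trajectories_ODE hv (fun t _ => (hA x t).continuousAt.continuousWithinAt)
    (fun t _ => (hA x t).hasDerivWithinAt) (fun t _ => (hA y t).continuousAt.continuousWithinAt)
    (fun t _ => (hA y t).hasDerivWithinAt) (by rw [hA0, hA0]) T ⟨hT, le_rfl⟩
  rw [coe_toNNReal _ (exp_pos _).le, mul_comm]
  simpa using this

end ODE

theorem le_apply_of_deriv_pos_on_level {u u' : ℝ → ℝ} (hu : ∀ t, HasDerivAt u (u' t) t)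
    {y a T : ℝ} (hbar : ∀ t, u t = y → 0 < u' t) (ha : y ≤ u a) (hT : a ≤ T) : y ≤ u T :=
  image_le_of_deriv_right_lt_deriv_boundary' (f' := 0) continuousOn_const
    (fun _ _ => hasDerivWithinAt_const _ _ _) ha
    (HasDerivAt.continuousOn fun t _ => hu t) (fun t _ => (hu t).hasDerivWithinAt)
    (fun t _ h => hbar t h.symm) ⟨hT, le_rfl⟩

theorem apply_le_of_deriv_neg_on_level {u u' : ℝ → ℝ} (hu : ∀ t, HasDerivAt u (u' t) t)
    {y a T : ℝ} (hbar : ∀ t, u t = y → u' t < 0) (ha : u a ≤ y) (hT : a ≤ T) : u T ≤ y :=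
  image_le_of_deriv_right_lt_deriv_boundary' (B' := 0)
    (HasDerivAt.continuousOn fun t _ => hu t) (fun t _ => (hu t).hasDerivWithinAt) ha
    continuousOn_const (fun _ _ => hasDerivWithinAt_const _ _ _) (fun t _ h => hbar t h)
    ⟨hT, le_rfl⟩

theorem sin_eq_zero_iff_of_mem_Ico {x : ℝ} (hx : x ∈ Ico 0 (2 * π)) :
    sin x = 0 ↔ x = 0 ∨ x = π := by
  refine ⟨fun h => ?_, by rintro (rfl | rfl) <;> simp⟩
  obtain ⟨n, rfl⟩ := sin_eq_zero_iff.mp h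
  have h0 : (0 : ℝ) ≤ n := by nlinarith [hx.1, pi_pos]
  have h2 : (n : ℝ) < 2 := by nlinarith [hx.2, pi_pos]
  obtain rfl | rfl : n = 0 ∨ n = 1 := by
    have : 0 ≤ n := by exact_mod_cast h0
    have : n < 2 := by exact_mod_cast h2
    omega
  all_goals simp

theorem tendsto_cot_nhdsGT_zero : Tendsto cot (𝓝[>] 0) atTop := by
  have hsin : Tendsto sin (𝓝[>] 0) (𝓝[>] 0) := by
    refine tendsto_nhdsWithin_of_tendsto_nhds_of_eventually_within _ ?_ ?_
    · simpa using (continuous_sin.tendsto 0).mono_left nhdsWithin_le_nhds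
    · filter_upwards [Ioo_mem_nhdsGT pi_pos] with x hx using sin_pos_of_pos_of_lt_pi hx.1 hx.2
  have hcos : Tendsto cos (𝓝[>] 0) (𝓝 1) := by
    simpa using (continuous_cos.tendsto 0).mono_left nhdsWithin_le_nhds
  refine (hcos.pos_mul_atTop one_pos (tendsto_inv_nhdsGT_zero.comp hsin)).congr fun x => ?_
  simp [cot_eq_cos_div_sin, div_eq_mul_inv]

theorem lipschitzWith_const_mul_sin_sub (c k : ℝ) :
    LipschitzWith ‖c‖₊ (fun y => c * sin y - k) := by
  simpa using ((lipschitzWith_smul c).comp lipschitzWith_sin).sub (LipschitzWith.const k)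

theorem exists_hasDerivAt_const_mul_sin_sub_eq_mem_uIcc (c : ℝ) {κ : ℝ → ℝ}
    (hκ : Continuous κ) {M : ℝ} (hM : ∀ t, |κ t| ≤ M) {T : ℝ} (hT : 0 ≤ T) {a b : ℝ}
    (ha : M < c * sin a) (hb : c * sin b < -M) :
    ∃ α : ℝ → ℝ, (∀ t, HasDerivAt α (c * sin (α t) - κ t) t) ∧ α T = α 0 ∧ α 0 ∈ uIcc a b := by
  have hv := fun t => lipschitzWith_const_mul_sin_sub c (κ t)
  have hbound : ∀ t y, ‖c * sin y - κ t‖ ≤ (‖c‖₊ + ‖M‖₊ : NNReal) := fun t y => by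
    push_cast
    calc ‖c * sin y - κ t‖ ≤ ‖c‖ * ‖sin y‖ + ‖κ t‖ := by rw [← norm_mul]; exact norm_sub_le _ _
      _ ≤ ‖c‖ * 1 + ‖M‖ := by
        gcongr
        · exact abs_sin_le_one y
        · exact (hM t).trans (le_abs_self M)
      _ = ‖c‖ + ‖M‖ := by ring
  choose A hA0 hA using exists_forall_hasDerivAt_of_lipschitzWith_of_norm_le hv
    (fun y => continuous_const.sub hκ) hbound
  have hφ := continuous_solution_eval_of_lipschitzWith hv hA0 hA hT
  have hup : a ≤ A a T := le_apply_of_deriv_pos_on_level (hA a)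
    (fun t h => by rw [h]; linarith [(abs_le.mp (hM t)).2]) (hA0 a).ge hT
  have hdown : A b T ≤ b := apply_le_of_deriv_neg_on_level (hA b)
    (fun t h => by rw [h]; linarith [(abs_le.mp (hM t)).1]) (hA0 b).le hT
  obtain ⟨x, hx, hfix⟩ := exists_mem_uIcc_isFixedPt hφ.continuousOn hup hdown
  exact ⟨A x, hA x, by rw [hA0]; exact hfix, by rwa [hA0]⟩

theorem not_exists_int_eq_add_mul_two_pi {x y : ℝ} (hx : x ∈ Icc (-(π / 4)) (π / 4))
    (hy : y ∈ Icc (π - π / 4) (π / 4 + π)) : ¬ ∃ n : ℤ, x = y + n * (2 * π) := by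
  rintro ⟨n, rfl⟩
  have hneg : (n : ℝ) < 0 := by nlinarith [hx.2, hy.1, pi_pos]
  have hgt : (-1 : ℝ) < n := by nlinarith [hx.1, hy.2, pi_pos]
  have : n < 0 := by exact_mod_cast hneg
  have : -1 < n := by exact_mod_cast hgt
  omega

/-- In the limit `l → 0` the bicycle equation degenerates to `sin α = 0`, which has exactly
the two nondegenerate constant solutions `α = 0` and `α = π` on the circle; hence for all
sufficiently small `l > 0` the time-`L` monodromy of `α' = cot(l) sin α - κ` has at least
two fixed points (two periodic-mod-2π solutions with distinct initial conditions mod 2π). -/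
theorem stmt_13 (L : ℝ) (hL : 0 < L) (κ : ℝ → ℝ) (hκ : Continuous κ)
    (hκper : Function.Periodic κ L) :
    (∀ α ∈ Set.Ico (0 : ℝ) (2 * Real.pi), (Real.sin α = 0 ↔ α = 0 ∨ α = Real.pi)) ∧
    (Real.cos 0 ≠ 0 ∧ Real.cos Real.pi ≠ 0) ∧
    ∃ ε > (0 : ℝ), ∀ l ∈ Set.Ioo (0 : ℝ) ε,
      ∃ α₁ α₂ : ℝ → ℝ,
        (∀ x, HasDerivAt α₁ (Real.cot l * Real.sin (α₁ x) - κ x) x) ∧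
        (∀ x, HasDerivAt α₂ (Real.cot l * Real.sin (α₂ x) - κ x) x) ∧
        (∃ n : ℤ, α₁ L = α₁ 0 + n * (2 * Real.pi)) ∧
        (∃ n : ℤ, α₂ L = α₂ 0 + n * (2 * Real.pi)) ∧
        ¬ ∃ n : ℤ, α₁ 0 = α₂ 0 + n * (2 * Real.pi) := by
  refine ⟨fun x hx => sin_eq_zero_iff_of_mem_Ico hx, by simp, ?_⟩
  obtain ⟨M, hM⟩ := isBounded_iff_forall_norm_le.mp (hκper.isBounded_of_continuous hL.ne' hκ)
  replace hM : ∀ t, |κ t| ≤ M := fun t => hM _ (mem_range_self t)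
  have hs : 0 < sin (π / 4) := sin_pos_of_pos_of_lt_pi (by positivity) (by linarith [pi_pos])
  obtain ⟨ε, hε, hsmall⟩ := mem_nhdsGT_iff_exists_Ioo_subset.mp
    (tendsto_cot_nhdsGT_zero.eventually_gt_atTop (M / sin (π / 4)))
  refine ⟨ε, hε, fun l hl => ?_⟩
  have hcM : M < cot l * sin (π / 4) := (div_lt_iff₀ hs).mp (hsmall hl)
  obtain ⟨α₁, hα₁, hα₁L, hα₁0⟩ := exists_hasDerivAt_const_mul_sin_sub_eq_mem_uIcc (cot l) hκ hM
    hL.le (a := π / 4) (b := -(π / 4)) hcM (by rw [sin_neg]; linarith)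
  obtain ⟨α₂, hα₂, hα₂L, hα₂0⟩ := exists_hasDerivAt_const_mul_sin_sub_eq_mem_uIcc (cot l) hκ hM
    hL.le (a := π - π / 4) (b := π / 4 + π) (by rwa [sin_pi_sub]) (by rw [sin_add_pi]; linarith)
  refine ⟨α₁, α₂, hα₁, hα₂, ⟨0, by simpa⟩, ⟨0, by simpa⟩, ?_⟩
  rw [uIcc_of_ge (by linarith [pi_pos])] at hα₁0
  rw [uIcc_of_le (by linarith [pi_pos])] at hα₂0
  exact not_exists_int_eq_add_mul_two_pi hα₁0 hα₂0
end
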